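/- (Vacancy chains, extra seat) Let I be a Hospitals/Residents instance with strict preferences and let I' be obtained from I by increasing the upper quota of a single company by one (all other data unchanged). Let S be the set of matched applicants in a stable matching of I and S' the set of matched applicants in a stable matching of I'. Then either S' = S, or S' = S ∪ {b} for some applicant b ∉ S. -/

import Mathlib

/-!
Compare a stable matching `M` for quotas `u` with a stable matching `M'` for quotas `u'`, and
call a company critical if one of its `M`-assignees prefers it to her `M'`-assignment. Stability
of `M'` makes a critical company full in `M'`, with all its `M'`-assignees ranked above that
applicant; stability of `M` then gives each of them an `M`-seat at least as good, hence again at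
a critical company. So the `M'`-applicants at critical companies are among the `M`-applicants
there, and every applicant matched by `M` but not by `M'` sits at a critical company; counting
seats bounds the latter by `∑ c, (u c - u' c)`. For one extra seat at `c₀` this bound is `0` in
one direction and `1` in the other.
-/

open Finset

variable {A C : Type*} [Fintype A] [DecidableEq A] [Fintype C] [DecidableEq C]

/-- `M` is a matching w.r.t. the acceptable pairs `E` and the upper quotas `u`. -/
def IsMatching (E : Finset (A × C)) (u : C → ℕ) (M : Finset (A × C)) : Prop :=
  M ⊆ E ∧ (∀ a : A, (M.filter (fun p => p.1 = a)).card ≤ 1) ∧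
    ∀ c : C, (M.filter (fun p => p.2 = c)).card ≤ u c

/-- `(a, c) ∈ E \ M` blocks `M`. -/
def Blocks (E : Finset (A × C)) (u : C → ℕ) (pref : A → C → ℕ) (s : A → C → ℤ)
    (M : Finset (A × C)) (a : A) (c : C) : Prop :=
  (a, c) ∈ E ∧ (a, c) ∉ M ∧ (∀ c', (a, c') ∈ M → pref a c < pref a c') ∧
    ((M.filter (fun p => p.2 = c)).card < u c ∨ ∃ h : A, (h, c) ∈ M ∧ s h c < s a c)

/-- `M` is stable: no pair blocks it. -/
def Stable (E : Finset (A × C)) (u : C → ℕ) (pref : A → C → ℕ) (s : A → C → ℤ)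
    (M : Finset (A × C)) : Prop :=
  ∀ (a : A) (c : C), ¬ Blocks E u pref s M a c

theorem Finset.eq_or_eq_insert_of_subset_of_card_sdiff_le_one {α : Type*} [DecidableEq α]
    {s t : Finset α} (hst : s ⊆ t) (hcard : #(t \ s) ≤ 1) :
    t = s ∨ ∃ b ∉ s, t = insert b s := by
  rcases Nat.le_one_iff_eq_zero_or_eq_one.1 hcard with h | h
  · exact .inl (hst.antisymm' (sdiff_eq_empty_iff_subset.1 (card_eq_zero.1 h)))
  · obtain ⟨b, hb⟩ := card_eq_one.1 h
    have hbt : b ∈ t \ s := hb ▸ mem_singleton_self b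
    refine .inr ⟨b, (mem_sdiff.1 hbt).2, ?_⟩
    rw [← union_sdiff_of_subset hst, hb, union_comm, insert_eq]

section

variable {ι : Type*} [Fintype ι] [DecidableEq ι]

theorem Finset.sum_tsub_update_succ_eq_zero (u : ι → ℕ) (i₀ : ι) :
    ∑ i, (u i - Function.update u i₀ (u i₀ + 1) i) = 0 := by
  refine sum_eq_zero fun i _ => tsub_eq_zero_of_le ?_
  rcases eq_or_ne i i₀ with rfl | h
  · simp
  · simp [h]

theorem Finset.sum_update_succ_tsub_eq_one (u : ι → ℕ) (i₀ : ι) :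
    ∑ i, (Function.update u i₀ (u i₀ + 1) i - u i) = 1 := by
  rw [sum_eq_single i₀ (fun i _ h => by simp [h]) (by simp)]
  simp

end

section

variable {α γ : Type*} {E : Finset (α × γ)} {u : γ → ℕ} {pref : α → γ → ℕ} {s : α → γ → ℤ}
  {M : Finset (α × γ)}

def Prefers (pref : α → γ → ℕ) (M : Finset (α × γ)) (a : α) (c : γ) : Prop :=
  ∀ c', (a, c') ∈ M → pref a c < pref a c'

theorem IsMatching.eq_of_mem [DecidableEq α] [DecidableEq γ] (hM : IsMatching E u M)
    {a : α} {c c' : γ} (h : (a, c) ∈ M) (h' : (a, c') ∈ M) : c = c' :=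
  congrArg Prod.snd <| card_le_one.1 (hM.2.1 a) _ (mem_filter.2 ⟨h, rfl⟩) _
    (mem_filter.2 ⟨h', rfl⟩)

theorem IsMatching.injOn_fst [DecidableEq α] [DecidableEq γ] (hM : IsMatching E u M) :
    Set.InjOn Prod.fst (M : Set (α × γ)) :=
  fun _ hp _ hq h => Prod.ext h (hM.eq_of_mem hp (h ▸ hq))

theorem IsMatching.card_applicants_at [DecidableEq α] [DecidableEq γ] (hM : IsMatching E u M)
    (K : Finset γ) : #({p ∈ M | p.2 ∈ K}.image Prod.fst) = ∑ c ∈ K, #{p ∈ M | p.2 = c} := by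
  rw [card_image_of_injOn (hM.injOn_fst.mono (coe_subset.2 (filter_subset _ _))),
    sum_card_fiberwise_eq_card_filter]

theorem Stable.full_of_prefers [DecidableEq γ] (hM : Stable E u pref s M) {a : α} {c : γ}
    (hac : (a, c) ∈ E) (hpref : Prefers pref M a c) :
    u c ≤ #{p ∈ M | p.2 = c} ∧ ∀ h, (h, c) ∈ M → s a c ≤ s h c := by
  have hblock := hM a c
  simp only [Blocks, not_and, not_or, not_exists, not_lt] at hblock
  exact hblock hac (fun hacM => (hpref c hacM).false) hpref

theorem Stable.exists_better_of_outranks [DecidableEq γ] (hM : Stable E u pref s M)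
    (hprefStrict : ∀ x c c', (x, c) ∈ E → (x, c') ∈ E → pref x c = pref x c' → c = c')
    (hME : M ⊆ E) {a q : α} {c : γ} (hac : (a, c) ∈ E) (hacM : (a, c) ∉ M) (hqc : (q, c) ∈ M)
    (hlt : s q c < s a c) : ∃ c', (a, c') ∈ M ∧ pref a c' < pref a c := by
  by_contra! hworse
  refine hM a c ⟨hac, hacM, fun c' hc' => (hworse c' hc').lt_of_ne fun heq => ?_,
    .inr ⟨q, hqc, hlt⟩⟩
  exact hacM (hprefStrict a c c' hac (hME hc') heq ▸ hc')

end

section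

variable {α γ : Type*} [DecidableEq α] [DecidableEq γ] {E E' : Finset (α × γ)} {u u' : γ → ℕ}
  {M M' : Finset (α × γ)}

theorem IsMatching.card_image_fst_sdiff_le (hM : IsMatching E u M) (hM' : IsMatching E' u' M')
    (K : Finset γ) (hfull : ∀ c ∈ K, u' c ≤ #{p ∈ M' | p.2 = c})
    (hback : ∀ p ∈ M', p.2 ∈ K → ∃ c ∈ K, (p.1, c) ∈ M)
    (hlost : ∀ p ∈ M, p.1 ∉ M'.image Prod.fst → p.2 ∈ K) :
    #(M.image Prod.fst \ M'.image Prod.fst) ≤ ∑ c ∈ K, (u c - u' c) := by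
  set T := {p ∈ M | p.2 ∈ K}.image Prod.fst
  set T' := {p ∈ M' | p.2 ∈ K}.image Prod.fst
  have hT'T : T' ⊆ T := by
    intro a ha
    obtain ⟨p, hp, rfl⟩ := mem_image.1 ha
    obtain ⟨hpM', hpK⟩ := mem_filter.1 hp
    obtain ⟨c, hcK, hpcM⟩ := hback p hpM' hpK
    exact mem_image.2 ⟨(p.1, c), mem_filter.2 ⟨hpcM, hcK⟩, rfl⟩
  have hlost' : M.image Prod.fst \ M'.image Prod.fst ⊆ T \ T' := by
    intro a ha
    obtain ⟨haM, haM'⟩ := mem_sdiff.1 ha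
    obtain ⟨p, hp, rfl⟩ := mem_image.1 haM
    exact mem_sdiff.2 ⟨mem_image_of_mem _ (mem_filter.2 ⟨hp, hlost p hp haM'⟩),
      fun h => haM' (image_subset_image (filter_subset _ _) h)⟩
  calc #(M.image Prod.fst \ M'.image Prod.fst) ≤ #(T \ T') := card_le_card hlost'
    _ = ∑ c ∈ K, #{p ∈ M | p.2 = c} - ∑ c ∈ K, #{p ∈ M' | p.2 = c} := by
      rw [card_sdiff_of_subset hT'T, hM.card_applicants_at, hM'.card_applicants_at]
    _ ≤ ∑ c ∈ K, u c - ∑ c ∈ K, u' c :=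
      tsub_le_tsub (sum_le_sum fun c _ => hM.2.2 c) (sum_le_sum hfull)
    _ ≤ ∑ c ∈ K, (u c - u' c) := by
      rw [tsub_le_iff_right, ← sum_add_distrib]
      exact sum_le_sum fun c _ => le_tsub_add

theorem card_matched_sdiff_le [Fintype γ] {pref : α → γ → ℕ} {s : α → γ → ℤ}
    (hprefStrict : ∀ x c c', (x, c) ∈ E → (x, c') ∈ E → pref x c = pref x c' → c = c')
    (hcompStrict : ∀ c x y, (x, c) ∈ E → (y, c) ∈ E → s x c = s y c → x = y)
    (hM : IsMatching E u M) (hMstable : Stable E u pref s M)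
    (hM' : IsMatching E u' M') (hM'stable : Stable E u' pref s M') :
    #(M.image Prod.fst \ M'.image Prod.fst) ≤ ∑ c, (u c - u' c) := by
  classical
  set K := {p ∈ M | Prefers pref M' p.1 p.2}.image Prod.snd  -- the critical companies
  have hK : ∀ c ∈ K, u' c ≤ #{p ∈ M' | p.2 = c} ∧
      ∃ q, (q, c) ∈ M ∧ (q, c) ∉ M' ∧ ∀ h, (h, c) ∈ M' → s q c ≤ s h c := by
    intro c hc
    obtain ⟨⟨q, c⟩, hq, rfl⟩ := mem_image.1 hc
    obtain ⟨hqM, hqpref⟩ := mem_filter.1 hq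
    obtain ⟨hfull, hranked⟩ := hM'stable.full_of_prefers (hM.1 hqM) hqpref
    exact ⟨hfull, q, hqM, fun hqM' => (hqpref c hqM').false, hranked⟩
  refine (hM.card_image_fst_sdiff_le hM' K (fun c hc => (hK c hc).1) ?_ ?_).trans
    (sum_le_sum_of_subset (subset_univ K))
  · rintro ⟨a, c⟩ hacM' hcK
    by_cases hacM : (a, c) ∈ M
    · exact ⟨c, hcK, hacM⟩
    obtain ⟨q, hqM, hqM', hranked⟩ := (hK c hcK).2
    have hlt : s q c < s a c := (hranked a hacM').lt_of_ne fun heq =>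
      hqM' (hcompStrict c q a (hM.1 hqM) (hM'.1 hacM') heq ▸ hacM')
    obtain ⟨c', hac'M, hbetter⟩ :=
      hMstable.exists_better_of_outranks hprefStrict hM.1 (hM'.1 hacM') hacM hqM hlt
    refine ⟨c', mem_image.2 ⟨(a, c'), mem_filter.2 ⟨hac'M, fun d hd => ?_⟩, rfl⟩, hac'M⟩
    exact hM'.eq_of_mem hacM' hd ▸ hbetter
  · rintro ⟨a, c⟩ hacM haM'
    refine mem_image.2 ⟨(a, c), mem_filter.2 ⟨hacM, fun d hd => ?_⟩, rfl⟩
    exact absurd (mem_image_of_mem Prod.fst hd) haM'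

end

/-- Vacancy chains, extra seat (Theorem 4/iii, second part): let `I` be an HR instance
with strict preferences and upper quotas `u`, and let `I'` be the instance obtained from
`I` by increasing the upper quota of the single company `c₀` by one (all other data
unchanged).  If `S` is the set of matched applicants in a stable matching `M` of `I`
and `S'` the set of matched applicants in a stable matching `M'` of `I'`, then either
`S' = S` or `S' = S ∪ {b}` for some applicant `b ∉ S`. -/
theorem vacancy_chain_extra_seat
    (E : Finset (A × C)) (u : C → ℕ) (pref : A → C → ℕ) (s : A → C → ℤ) (c₀ : C)
    (hprefStrict : ∀ x c c', (x, c) ∈ E → (x, c') ∈ E → pref x c = pref x c' → c = c')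
    (hcompStrict : ∀ c x y, (x, c) ∈ E → (y, c) ∈ E → s x c = s y c → x = y)
    (M M' : Finset (A × C))
    (hM : IsMatching E u M) (hMstable : Stable E u pref s M)
    (hM' : IsMatching E (Function.update u c₀ (u c₀ + 1)) M')
    (hM'stable : Stable E (Function.update u c₀ (u c₀ + 1)) pref s M')
    (S S' : Finset A)
    (hS : S = M.image Prod.fst) (hS' : S' = M'.image Prod.fst) :
    S' = S ∨ ∃ b : A, b ∉ S ∧ S' = insert b S := by
  subst hS hS'
  have hkept := card_matched_sdiff_le hprefStrict hcompStrict hM hMstable hM' hM'stable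
  have hnew := card_matched_sdiff_le hprefStrict hcompStrict hM' hM'stable hM hMstable
  rw [sum_tsub_update_succ_eq_zero, Nat.le_zero, card_eq_zero, sdiff_eq_empty_iff_subset]
    at hkept
  rw [sum_update_succ_tsub_eq_one] at hnew
  simpa only [exists_prop] using eq_or_eq_insert_of_subset_of_card_sdiff_le_one hkept hnew
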